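/- Let f : ℂ × ℝ → ℂ be continuous and suppose that for every θ ∈ ℝ the function z ↦ f(z,θ) is entire (complex differentiable on all of ℂ). Then the function φ(X,Y,Z) = (1/(2π))·∫₀^{2π} f(Z + i·(X·cos θ + Y·sin θ), θ) dθ is harmonic on all of ℝ³. -/

import Mathlib

set_option synthInstance.maxHeartbeats 1000000

/-- A complex-valued function on an open subset `U` of `ℝ³` is harmonic if it is `C²` on `U`
and the sum of its three second partial derivatives along the coordinate axes vanishes on `U`. -/
def IsHarmonicOnC (U : Set (ℝ × ℝ × ℝ)) (φ : ℝ × ℝ × ℝ → ℂ) : Prop :=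
  ContDiffOn ℝ 2 φ U ∧ ∀ p ∈ U,
    fderiv ℝ (fun q => fderiv ℝ φ q (1,0,0)) p (1,0,0) +
    fderiv ℝ (fun q => fderiv ℝ φ q (0,1,0)) p (0,1,0) +
    fderiv ℝ (fun q => fderiv ℝ φ q (0,0,1)) p (0,0,1) = 0

open Complex MeasureTheory Metric Set intervalIntegral

noncomputable section Harm

/-- The `ℝ`-linear map `p ↦ I*cos θ * p.1 + I*sin θ * p.2.1 + p.2.2`. -/
def Lmap (θ : ℝ) : (ℝ × ℝ × ℝ) →L[ℝ] ℂ :=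
  (Complex.I * Real.cos θ) • (Complex.ofRealCLM.comp (ContinuousLinearMap.fst ℝ ℝ (ℝ × ℝ))) +
  (Complex.I * Real.sin θ) • (Complex.ofRealCLM.comp
    ((ContinuousLinearMap.fst ℝ ℝ ℝ).comp (ContinuousLinearMap.snd ℝ ℝ (ℝ × ℝ)))) +
  Complex.ofRealCLM.comp
    ((ContinuousLinearMap.snd ℝ ℝ ℝ).comp (ContinuousLinearMap.snd ℝ ℝ (ℝ × ℝ)))

lemma Lmap_apply (θ : ℝ) (p : ℝ × ℝ × ℝ) :
    Lmap θ p = Complex.I * Real.cos θ * p.1 + Complex.I * Real.sin θ * p.2.1 + p.2.2 := by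
  simp [Lmap]

lemma continuous_Lmap : Continuous Lmap := by
  unfold Lmap
  exact ((((continuous_const.mul
      (Complex.continuous_ofReal.comp Real.continuous_cos)).smul continuous_const).add
    ((continuous_const.mul
      (Complex.continuous_ofReal.comp Real.continuous_sin)).smul continuous_const)).add
    continuous_const)

lemma continuous_Lmap_eval : Continuous fun q : (ℝ × ℝ × ℝ) × ℝ => Lmap q.2 q.1 :=
  (continuous_Lmap.comp continuous_snd).clm_apply continuous_fst

lemma e_eq (θ : ℝ) (p : ℝ × ℝ × ℝ) :
    ((p.2.2 : ℂ) + Complex.I * (p.1 * Real.cos θ + p.2.1 * Real.sin θ)) = Lmap θ p := by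
  rw [Lmap_apply]; ring

/-- Chain rule for `q ↦ h (Lmap θ q, θ)`. -/
lemma hasFDerivAt_comp_L (h : ℂ × ℝ → ℂ) (hh : ∀ θ : ℝ, Differentiable ℂ fun z => h (z, θ))
    (θ : ℝ) (p : ℝ × ℝ × ℝ) :
    HasFDerivAt (fun q => h (Lmap θ q, θ))
      ((deriv (fun z => h (z, θ)) (Lmap θ p)) • Lmap θ) p := by
  have h1 : HasDerivAt (fun z => h (z, θ)) (deriv (fun z => h (z, θ)) (Lmap θ p)) (Lmap θ p) :=
    ((hh θ) (Lmap θ p)).hasDerivAt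
  have h2 := (h1.hasFDerivAt.restrictScalars ℝ).comp p (Lmap θ).hasFDerivAt
  have heq : ((deriv (fun z => h (z, θ)) (Lmap θ p)) • Lmap θ)
      = (ContinuousLinearMap.restrictScalars ℝ
          ((1 : ℂ →L[ℂ] ℂ).smulRight (deriv (fun z => h (z, θ)) (Lmap θ p)))).comp (Lmap θ) := by
    apply ContinuousLinearMap.ext
    intro v
    simp [mul_comm]
  rw [heq]
  exact h2

/-- The derivative of an entire function is entire. -/
lemma diff_deriv (h : ℂ × ℝ → ℂ) (hh : ∀ θ : ℝ, Differentiable ℂ fun z => h (z, θ)) (θ : ℝ) :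
    Differentiable ℂ fun z => deriv (fun w => h (w, θ)) z := by
  have := ((hh θ).differentiableOn.analyticOnNhd isOpen_univ).deriv
  exact fun z => (this z (mem_univ z)).differentiableAt

lemma circleMap_one_ne_zero (t : ℝ) : circleMap 0 1 t ≠ 0 := by
  simp [circleMap, Complex.exp_ne_zero]

/-- Joint continuity of the complex derivative of a jointly continuous family of
entire functions, via the Cauchy integral formula. -/
lemma cont_deriv (h : ℂ × ℝ → ℂ) (hc : Continuous h)
    (hh : ∀ θ : ℝ, Differentiable ℂ fun z => h (z, θ)) :
    Continuous fun q : ℂ × ℝ => deriv (fun z => h (z, q.2)) q.1 := by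
  have key : ∀ q : ℂ × ℝ, deriv (fun z => h (z, q.2)) q.1 =
      (2 * Real.pi * Complex.I)⁻¹ • ∫ t in (0:ℝ)..2 * Real.pi,
        (circleMap 0 1 t * Complex.I) •
          (((circleMap 0 1 t) ^ 2)⁻¹ • h (q.1 + circleMap 0 1 t, q.2)) := by
    intro q
    rw [← two_pi_I_inv_smul_circleIntegral_sub_sq_inv_smul_of_differentiable isOpen_univ
      (subset_univ (closedBall q.1 1)) ((hh q.2).differentiableOn) (mem_ball_self one_pos)]
    congr 1
    rw [circleIntegral]
    refine intervalIntegral.integral_congr fun t _ => ?_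
    simp [deriv_circleMap, circleMap]
  rw [funext key]
  refine (continuous_const : Continuous fun _ : ℂ × ℝ => (2 * (Real.pi : ℂ) * Complex.I)⁻¹).smul ?_
  have c1 : Continuous fun qt : (ℂ × ℝ) × ℝ => circleMap 0 1 qt.2 :=
    (continuous_circleMap 0 1).comp continuous_snd
  have c2 : Continuous fun qt : (ℂ × ℝ) × ℝ => h (qt.1.1 + circleMap 0 1 qt.2, qt.1.2) :=
    hc.comp ((continuous_fst.fst.add c1).prodMk continuous_fst.snd)
  have c3 : Continuous fun qt : (ℂ × ℝ) × ℝ => ((circleMap 0 1 qt.2) ^ 2)⁻¹ :=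
    (c1.pow 2).inv₀ fun x => pow_ne_zero 2 (circleMap_one_ne_zero _)
  exact intervalIntegral.continuous_parametric_intervalIntegral_of_continuous'
    ((c1.mul continuous_const).smul (c3.smul c2)) 0 (2 * Real.pi)

/-- Differentiation under the interval integral, for a jointly continuous family with
jointly continuous derivative. -/
lemma key_deriv {E : Type*} [NormedAddCommGroup E] [NormedSpace ℝ E] [CompleteSpace E]
    {H : Type*} [NormedAddCommGroup H] [NormedSpace ℝ H] [ProperSpace H] {a b : ℝ}
    (G : H → ℝ → E) (G' : H → ℝ → H →L[ℝ] E)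
    (hG : Continuous fun q : H × ℝ => G q.1 q.2)
    (hG' : Continuous fun q : H × ℝ => G' q.1 q.2)
    (hd : ∀ p t, HasFDerivAt (fun q => G q t) (G' p t) p) (p₀ : H) :
    HasFDerivAt (fun p => ∫ t in a..b, G p t) (∫ t in a..b, G' p₀ t) p₀ := by
  obtain ⟨C, hC⟩ := (isCompact_closedBall p₀ 1 |>.prod isCompact_uIcc).exists_bound_of_continuousOn
      (hG'.continuousOn (s := closedBall p₀ 1 ×ˢ uIcc a b))
  refine intervalIntegral.hasFDerivAt_integral_of_dominated_of_fderiv_le (𝕜 := ℝ)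
    (bound := fun _ => C) (ball_mem_nhds p₀ one_pos) ?_ ?_ ?_ ?_ ?_ ?_
  · exact Filter.Eventually.of_forall fun x =>
      (hG.comp (continuous_const.prodMk continuous_id)).aestronglyMeasurable
  · exact (hG.comp (continuous_const.prodMk continuous_id)).intervalIntegrable a b
  · exact (hG'.comp (continuous_const.prodMk continuous_id)).aestronglyMeasurable
  · refine Filter.Eventually.of_forall fun t ht x hx => hC (x, t) ?_
    exact ⟨ball_subset_closedBall hx, Set.uIoc_subset_uIcc ht⟩
  · exact intervalIntegrable_const
  · exact Filter.Eventually.of_forall fun t _ x _ => hd x t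

lemma isBoundedBilinearMap_smulRight' {H : Type*} [NormedAddCommGroup H] [NormedSpace ℝ H] :
    IsBoundedBilinearMap ℝ fun uv : (H →L[ℝ] ℂ) × (H →L[ℝ] ℂ) => uv.1.smulRight uv.2 where
  add_left u₁ u₂ v := by ext x y; simp [add_mul]
  smul_left c u v := by ext x y; simp [Complex.real_smul]; try ring
  add_right u v₁ v₂ := by ext x y; simp [mul_add]
  smul_right c u v := by ext x y; simp [Complex.real_smul]; try ring
  bound := by
    refine ⟨1, one_pos, fun u v => ?_⟩
    rw [one_mul]
    refine ContinuousLinearMap.opNorm_le_bound _ (by positivity) fun x => ?_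
    rw [ContinuousLinearMap.smulRight_apply, norm_smul]
    calc ‖u x‖ * ‖v‖ ≤ (‖u‖ * ‖x‖) * ‖v‖ := by
          gcongr; exact u.le_opNorm x
      _ = ‖u‖ * ‖v‖ * ‖x‖ := by ring

set_option maxHeartbeats 1000000 in
theorem stmt_2 (f : ℂ × ℝ → ℂ) (hf : Continuous f)
    (hent : ∀ θ : ℝ, Differentiable ℂ (fun z => f (z, θ))) :
    IsHarmonicOnC Set.univ
      (fun p : ℝ × ℝ × ℝ =>
        ((1/(2*Real.pi) : ℝ) : ℂ) * ∫ θ in (0:ℝ)..(2*Real.pi),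
          f ((p.2.2 : ℂ) + Complex.I * (p.1 * Real.cos θ + p.2.1 * Real.sin θ), θ)) := by
  classical
  rw [IsHarmonicOnC]
  set c : ℂ := ((1/(2*Real.pi) : ℝ) : ℂ) with hc
  -- the first and second complex derivatives of `f` in the first variable
  set g1 : ℂ × ℝ → ℂ := fun q => deriv (fun z => f (z, q.2)) q.1 with hg1
  have hg1c : Continuous g1 := cont_deriv f hf hent
  have hg1e : ∀ θ : ℝ, Differentiable ℂ fun z => g1 (z, θ) := fun θ => diff_deriv f hent θ
  set g2 : ℂ × ℝ → ℂ := fun q => deriv (fun z => g1 (z, q.2)) q.1 with hg2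
  have hg2c : Continuous g2 := cont_deriv g1 hg1c hg1e
  -- the integrand and its fderivs in `p`
  set Φ : (ℝ × ℝ × ℝ) → ℝ → ℂ := fun p θ => f (Lmap θ p, θ) with hΦ
  set Φ' : (ℝ × ℝ × ℝ) → ℝ → (ℝ × ℝ × ℝ) →L[ℝ] ℂ :=
    fun p θ => g1 (Lmap θ p, θ) • Lmap θ with hΦ'
  set Φ'' : (ℝ × ℝ × ℝ) → ℝ → (ℝ × ℝ × ℝ) →L[ℝ] ((ℝ × ℝ × ℝ) →L[ℝ] ℂ) :=
    fun p θ => (g2 (Lmap θ p, θ) • Lmap θ).smulRight (Lmap θ) with hΦ''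
  have hLe : Continuous fun q : (ℝ × ℝ × ℝ) × ℝ => (Lmap q.2 q.1, q.2) :=
    continuous_Lmap_eval.prodMk continuous_snd
  have hΦc : Continuous fun q : (ℝ × ℝ × ℝ) × ℝ => Φ q.1 q.2 := hf.comp hLe
  have hΦ'c : Continuous fun q : (ℝ × ℝ × ℝ) × ℝ => Φ' q.1 q.2 :=
    (hg1c.comp hLe).smul (continuous_Lmap.comp continuous_snd)
  have hΦ''c : Continuous fun q : (ℝ × ℝ × ℝ) × ℝ => Φ'' q.1 q.2 :=
    isBoundedBilinearMap_smulRight'.continuous.comp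
      (((hg2c.comp hLe).smul (continuous_Lmap.comp continuous_snd)).prodMk
        (continuous_Lmap.comp continuous_snd))
  have hasfd1 : ∀ p θ, HasFDerivAt (fun q => Φ q θ) (Φ' p θ) p := fun p θ =>
    hasFDerivAt_comp_L f hent θ p
  have hasfd2 : ∀ p θ, HasFDerivAt (fun q => Φ' q θ) (Φ'' p θ) p := fun p θ =>
    (hasFDerivAt_comp_L g1 hg1e θ p).smul_const (Lmap θ)
  -- the integrals
  set φ₀ : (ℝ × ℝ × ℝ) → ℂ := fun p => ∫ θ in (0:ℝ)..(2*Real.pi), Φ p θ with hφ₀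
  set I1 : (ℝ × ℝ × ℝ) → (ℝ × ℝ × ℝ) →L[ℝ] ℂ :=
    fun p => ∫ θ in (0:ℝ)..(2*Real.pi), Φ' p θ with hI1
  set I2 : (ℝ × ℝ × ℝ) → (ℝ × ℝ × ℝ) →L[ℝ] ((ℝ × ℝ × ℝ) →L[ℝ] ℂ) :=
    fun p => ∫ θ in (0:ℝ)..(2*Real.pi), Φ'' p θ with hI2
  have hI1d : ∀ p, HasFDerivAt φ₀ (I1 p) p := fun p =>
    key_deriv Φ Φ' hΦc hΦ'c hasfd1 p
  have hI2d : ∀ p, HasFDerivAt I1 (I2 p) p := fun p =>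
    key_deriv Φ' Φ'' hΦ'c hΦ''c hasfd2 p
  have hI2c : Continuous I2 :=
    intervalIntegral.continuous_parametric_intervalIntegral_of_continuous' hΦ''c 0 (2*Real.pi)
  -- identify the target function with `fun p => c * φ₀ p`
  have hrw : (fun p : ℝ × ℝ × ℝ =>
      ((1/(2*Real.pi) : ℝ) : ℂ) * ∫ θ in (0:ℝ)..(2*Real.pi),
        f ((p.2.2 : ℂ) + Complex.I * (p.1 * Real.cos θ + p.2.1 * Real.sin θ), θ)) =
      fun p => c * φ₀ p := by
    funext p
    congr 1
    refine intervalIntegral.integral_congr fun θ _ => ?_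
    rw [e_eq]
  rw [hrw]
  -- fderiv computations
  have hφd : ∀ q, HasFDerivAt (fun p => c * φ₀ p) (c • I1 q) q := fun q =>
    (hI1d q).const_mul c
  have hfd1 : fderiv ℝ (fun p => c * φ₀ p) = fun q => c • I1 q :=
    funext fun q => (hφd q).fderiv
  constructor
  · -- C²
    have h1 : ContDiff ℝ 1 I1 := by
      rw [contDiff_one_iff_fderiv]
      refine ⟨fun p => (hI2d p).differentiableAt, ?_⟩
      have : fderiv ℝ I1 = I2 := funext fun p => (hI2d p).fderiv
      rw [this]; exact hI2c
    have h2 : ContDiff ℝ 2 (fun p => c * φ₀ p) := by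
      rw [show (2 : WithTop ℕ∞) = 1 + 1 from rfl, contDiff_succ_iff_fderiv]
      refine ⟨fun q => (hφd q).differentiableAt, by simp, ?_⟩
      rw [hfd1]
      exact h1.const_smul c
    exact h2.contDiffOn
  · -- the Laplacian vanishes
    intro p _
    -- second directional derivatives
    have hsecond : ∀ v : ℝ × ℝ × ℝ,
        fderiv ℝ (fun q => fderiv ℝ (fun p' => c * φ₀ p') q v) p v
          = c * ((I2 p) v v) := by
      intro v
      have heq : (fun q => fderiv ℝ (fun p' => c * φ₀ p') q v)
          = fun q => c * ((ContinuousLinearMap.apply ℝ ℂ v) (I1 q)) := by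
        funext q
        rw [hfd1]
        simp
      rw [heq]
      have hd : HasFDerivAt (fun q => c * ((ContinuousLinearMap.apply ℝ ℂ v) (I1 q)))
          (c • ((ContinuousLinearMap.apply ℝ ℂ v).comp (I2 p))) p :=
        (((ContinuousLinearMap.apply ℝ ℂ v).hasFDerivAt.comp p (hI2d p))).const_mul c
      rw [hd.fderiv]
      simp
  -- now compute `(I2 p) v v` as an integral
    have hI2app : ∀ v : ℝ × ℝ × ℝ, (I2 p) v v
        = ∫ θ in (0:ℝ)..(2*Real.pi), g2 (Lmap θ p, θ) * (Lmap θ v) * (Lmap θ v) := by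
      intro v
      have hc0 : Continuous fun θ => Φ'' p θ :=
        Continuous.uncurry_left (f := Φ'') p hΦ''c
      have hint := Continuous.intervalIntegrable (μ := volume)
        (E := (ℝ × ℝ × ℝ) →L[ℝ] ((ℝ × ℝ × ℝ) →L[ℝ] ℂ)) hc0 0 (2*Real.pi)
      rw [hI2, ContinuousLinearMap.intervalIntegral_apply hint v]
      have hint2 : IntervalIntegrable (fun θ => Φ'' p θ v) volume 0 (2*Real.pi) := by
        refine Continuous.intervalIntegrable ?_ 0 (2*Real.pi)
        exact ((hΦ''c.comp (continuous_const.prodMk continuous_id)).clm_apply continuous_const)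
      rw [ContinuousLinearMap.intervalIntegral_apply hint2 v]
      refine intervalIntegral.integral_congr fun θ _ => ?_
      simp [hΦ'', smul_smul]
    have hgv : ∀ v : ℝ × ℝ × ℝ,
        Continuous fun θ => g2 (Lmap θ p, θ) * (Lmap θ v) * (Lmap θ v) := by
      intro v
      have h1 : Continuous fun θ : ℝ => (Lmap θ p, θ) :=
        ((continuous_Lmap.clm_apply continuous_const)).prodMk continuous_id
      exact ((hg2c.comp h1).mul (continuous_Lmap.clm_apply continuous_const)).mul
        (continuous_Lmap.clm_apply continuous_const)
    rw [hsecond, hsecond, hsecond, hI2app, hI2app, hI2app]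
    rw [← mul_add, ← mul_add]
    rw [← intervalIntegral.integral_add (((hgv _).intervalIntegrable _ _))
      ((hgv _).intervalIntegrable _ _),
      ← intervalIntegral.integral_add ((((hgv _).intervalIntegrable _ _).add
        ((hgv _).intervalIntegrable _ _))) ((hgv _).intervalIntegrable _ _)]
    have hzero : ∀ θ ∈ Set.uIcc (0:ℝ) (2*Real.pi),
        (g2 (Lmap θ p, θ) * (Lmap θ (1,0,0)) * (Lmap θ (1,0,0)) +
         g2 (Lmap θ p, θ) * (Lmap θ (0,1,0)) * (Lmap θ (0,1,0))) +
         g2 (Lmap θ p, θ) * (Lmap θ (0,0,1)) * (Lmap θ (0,0,1)) = 0 := by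
      intro θ _
      have hL1 : Lmap θ ((1:ℝ),(0:ℝ),(0:ℝ)) = Complex.I * Real.cos θ := by
        rw [Lmap_apply]; simp
      have hL2 : Lmap θ ((0:ℝ),(1:ℝ),(0:ℝ)) = Complex.I * Real.sin θ := by
        rw [Lmap_apply]; simp
      have hL3 : Lmap θ ((0:ℝ),(0:ℝ),(1:ℝ)) = 1 := by
        rw [Lmap_apply]; simp
      rw [hL1, hL2, hL3]
      have hcs : ((Real.cos θ : ℂ))^2 + ((Real.sin θ : ℂ))^2 = 1 := by
        norm_cast
        exact Real.cos_sq_add_sin_sq θ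
      set w : ℂ := g2 (Lmap θ p, θ)
      linear_combination (w * (Real.cos θ : ℂ)^2 + w * (Real.sin θ : ℂ)^2) * Complex.I_sq
        - w * hcs
    rw [intervalIntegral.integral_congr hzero]
    simp

end Harm
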